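/- The function φ₀(x) := (1+|x|²)/(1−|x|²) satisfies Δ_H φ₀ − n φ₀ = 0 at every point of the open unit ball B₁ ⊂ ℝⁿ, and for every 0 < R < 1 it satisfies the Steklov boundary condition ∂_{ν_H} φ₀ = (2R/(1+R²)) φ₀ at every point of the sphere ∂B_R; i.e., φ₀ is an eigenfunction with boundary eigenvalue μ₀ = 2R/(1+R²). -/

import Mathlib

/-! `φ₀` is radial: `φ₀ = f ∘ |·|²` with `f s = (1 + s) / (1 - s)`. For such a function the chain
rule gives `∂ᵢ (f ∘ |·|²) = 2 xᵢ f'` and `Δ (f ∘ |·|²) = 2 n f' + 4 |x|² f''`, so `Δ_H φ₀` and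
`∂_{ν_H} φ₀` become rational expressions in `s = |x|²`, and with `f' = 2 / (1 - s)²`,
`f'' = 4 / (1 - s)³` they simplify to `n f(s)` and, on `|x| = R`, to `(2R / (1 + R²)) f(R²)`. -/

noncomputable section

open Real

/-- Partial derivative `∂ᵢ` of a function on `ℝⁿ`. -/
def pd {n : ℕ} (i : Fin n) (f : (Fin n → ℝ) → ℝ) (x : Fin n → ℝ) : ℝ :=
  fderiv ℝ f x (Pi.single i 1)

/-- Euclidean Laplacian on `ℝⁿ`. -/
def lapF {n : ℕ} (f : (Fin n → ℝ) → ℝ) (x : Fin n → ℝ) : ℝ :=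
  ∑ i, pd i (pd i f) x

/-- Squared Euclidean norm `|x|²`. -/
def nsq {n : ℕ} (x : Fin n → ℝ) : ℝ := ∑ i, (x i) ^ 2

/-- The Laplace–Beltrami operator of the Poincaré metric
`g_H = 4|dx|²/(1-|x|²)²` on the unit ball:
`Δ_H v = ((1-|x|²)²/4) Δv + ((n-2)(1-|x|²)/2) x·∇v`. -/
def hypLap (n : ℕ) (v : (Fin n → ℝ) → ℝ) (x : Fin n → ℝ) : ℝ :=
  ((1 - nsq x) ^ 2 / 4) * lapF v x +
    (((n : ℝ) - 2) * (1 - nsq x) / 2) * ∑ i, x i * pd i v x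

/-- The outward hyperbolic normal derivative on the sphere `∂B_R`:
`∂_{ν_H} v = ((1-|x|²)/2) (x/R)·∇v`. -/
def hypNormalDeriv (n : ℕ) (R : ℝ) (v : (Fin n → ℝ) → ℝ) (x : Fin n → ℝ) : ℝ :=
  ((1 - nsq x) / 2) * ∑ i, (x i / R) * pd i v x

open Topology

section RadialCalculus

variable {n : ℕ} {x : Fin n → ℝ}

theorem continuous_nsq : Continuous (nsq (n := n)) := by
  unfold nsq; fun_prop

theorem hasFDerivAt_nsq (x : Fin n → ℝ) :
    HasFDerivAt nsq
      (∑ i, (2 * x i) • ContinuousLinearMap.proj (R := ℝ) (φ := fun _ : Fin n => ℝ) i) x := by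
  refine HasFDerivAt.fun_sum fun i _ => ?_
  simpa [two_mul, add_smul, pow_two] using (hasFDerivAt_apply i x).fun_mul (hasFDerivAt_apply i x)

theorem sum_smul_proj_apply_single (c : Fin n → ℝ) (j : Fin n) :
    (∑ i, c i • ContinuousLinearMap.proj (R := ℝ) (φ := fun _ : Fin n => ℝ) i) (Pi.single j 1)
      = c j := by
  simp [Pi.single_apply]

theorem pd_eq_of_hasFDerivAt {f : (Fin n → ℝ) → ℝ} {L : (Fin n → ℝ) →L[ℝ] ℝ}
    (h : HasFDerivAt f L x) (i : Fin n) : pd i f x = L (Pi.single i 1) := by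
  rw [pd, h.fderiv]

theorem pd_comp_nsq {f : ℝ → ℝ} {f' : ℝ} (hf : HasDerivAt f f' (nsq x)) (i : Fin n) :
    pd i (fun y => f (nsq y)) x = 2 * x i * f' := by
  rw [pd_eq_of_hasFDerivAt (f := fun y => f (nsq y)) (hf.comp_hasFDerivAt x (hasFDerivAt_nsq x))]
  rw [smul_apply, sum_smul_proj_apply_single, smul_eq_mul]
  ring

theorem pd_pd_comp_nsq {f f' : ℝ → ℝ} {f'' : ℝ}
    (hf : ∀ᶠ s in 𝓝 (nsq x), HasDerivAt f (f' s) s)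
    (hf' : HasDerivAt f' f'' (nsq x)) (i : Fin n) :
    pd i (pd i (fun y => f (nsq y))) x = 2 * f' (nsq x) + 4 * x i ^ 2 * f'' := by
  have hpd : pd i (fun y => f (nsq y)) =ᶠ[𝓝 x] fun y => 2 * y i * f' (nsq y) :=
    ((continuous_nsq.tendsto x).eventually hf).mono fun y hy => pd_comp_nsq hy i
  rw [pd, hpd.fderiv_eq, HasFDerivAt.fderiv (f := fun y => 2 * y i * f' (nsq y))
    (((hasFDerivAt_apply i x).const_mul 2).mul (hf'.comp_hasFDerivAt x (hasFDerivAt_nsq x)))]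
  simp only [add_apply, smul_apply, sum_smul_proj_apply_single, ContinuousLinearMap.proj_apply,
    Pi.single_eq_same, smul_eq_mul]
  ring

theorem lapF_comp_nsq {f f' : ℝ → ℝ} {f'' : ℝ}
    (hf : ∀ᶠ s in 𝓝 (nsq x), HasDerivAt f (f' s) s)
    (hf' : HasDerivAt f' f'' (nsq x)) :
    lapF (fun y => f (nsq y)) x = 2 * n * f' (nsq x) + 4 * nsq x * f'' := by
  rw [lapF, Finset.sum_congr rfl fun i _ => pd_pd_comp_nsq hf hf' i, Finset.sum_add_distrib,
    ← Finset.sum_mul, ← Finset.sum_mul, ← Finset.mul_sum]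
  simp only [Finset.sum_const, Finset.card_univ, Fintype.card_fin, nsmul_eq_mul, nsq]
  ring

theorem sum_mul_pd_comp_nsq {f : ℝ → ℝ} {f' : ℝ} (hf : HasDerivAt f f' (nsq x)) :
    ∑ i, x i * pd i (fun y => f (nsq y)) x = 2 * nsq x * f' := by
  rw [nsq, Finset.mul_sum, Finset.sum_mul]
  exact Finset.sum_congr rfl fun i _ => by rw [pd_comp_nsq hf]; ring

theorem hypLap_comp_nsq {f f' : ℝ → ℝ} {f'' : ℝ}
    (hf : ∀ᶠ s in 𝓝 (nsq x), HasDerivAt f (f' s) s)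
    (hf' : HasDerivAt f' f'' (nsq x)) :
    hypLap n (fun y => f (nsq y)) x = (1 - nsq x) ^ 2 * (n * f' (nsq x) / 2 + nsq x * f'')
      + (n - 2) * (1 - nsq x) * nsq x * f' (nsq x) := by
  rw [hypLap, lapF_comp_nsq hf hf', sum_mul_pd_comp_nsq hf.self_of_nhds]
  ring

theorem hypNormalDeriv_comp_nsq (R : ℝ) {f : ℝ → ℝ} {f' : ℝ} (hf : HasDerivAt f f' (nsq x)) :
    hypNormalDeriv n R (fun y => f (nsq y)) x = (1 - nsq x) * nsq x * f' / R := by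
  simp_rw [hypNormalDeriv, div_mul_eq_mul_div, ← Finset.sum_div, sum_mul_pd_comp_nsq hf]
  ring

end RadialCalculus

theorem hasDerivAt_one_add_div_one_sub {s : ℝ} (hs : s ≠ 1) :
    HasDerivAt (fun t => (1 + t) / (1 - t)) (2 / (1 - s) ^ 2) s := by
  have hs' : 1 - s ≠ 0 := sub_ne_zero.2 hs.symm
  refine (((hasDerivAt_id s).const_add 1).fun_div ((hasDerivAt_id s).const_sub 1)
    hs').congr_deriv ?_
  simp only [id]
  field_simp
  ring

theorem hasDerivAt_two_div_one_sub_sq {s : ℝ} (hs : s ≠ 1) :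
    HasDerivAt (fun t => 2 / (1 - t) ^ 2) (4 / (1 - s) ^ 3) s := by
  have hs' : 1 - s ≠ 0 := sub_ne_zero.2 hs.symm
  refine ((hasDerivAt_const s (2 : ℝ)).fun_div (((hasDerivAt_id s).const_sub 1).fun_pow 2)
    (pow_ne_zero 2 hs')).congr_deriv ?_
  simp only [id]
  field_simp
  ring

theorem stmt_10_general (n : ℕ)
    (φ₀ : (Fin n → ℝ) → ℝ) (hφ₀ : φ₀ = fun x => (1 + nsq x) / (1 - nsq x)) :
    (∀ x : Fin n → ℝ, nsq x < 1 → hypLap n φ₀ x - (n : ℝ) * φ₀ x = 0) ∧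
    (∀ R : ℝ, 0 < R → R < 1 → ∀ x : Fin n → ℝ, nsq x = R ^ 2 →
      hypNormalDeriv n R φ₀ x = (2 * R / (1 + R ^ 2)) * φ₀ x) := by
  subst hφ₀
  refine ⟨fun x hx => ?_, fun R _ hR1 x hx => ?_⟩
  · have hf : ∀ᶠ s in 𝓝 (nsq x), HasDerivAt (fun t => (1 + t) / (1 - t)) (2 / (1 - s) ^ 2) s :=
      (eventually_ne_nhds hx.ne).mono fun s hs => hasDerivAt_one_add_div_one_sub hs
    rw [hypLap_comp_nsq hf (hasDerivAt_two_div_one_sub_sq hx.ne)]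
    have : 1 - nsq x ≠ 0 := by linarith
    field_simp
    ring
  · have hR2 : R ^ 2 < 1 := by nlinarith
    rw [hypNormalDeriv_comp_nsq R (hasDerivAt_one_add_div_one_sub (hx.trans_lt hR2).ne)]
    simp only [hx]
    have : 1 - R ^ 2 ≠ 0 := by linarith
    field_simp

/-- `φ₀(x) = (1+|x|²)/(1-|x|²)` satisfies `Δ_H φ₀ - n φ₀ = 0` in
the unit ball and the Steklov condition `∂_{ν_H} φ₀ = (2R/(1+R²)) φ₀` on every
sphere `∂B_R`, `0 < R < 1`. -/
theorem stmt_10 (n : ℕ) (hn : 2 ≤ n)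
    (φ₀ : (Fin n → ℝ) → ℝ) (hφ₀ : φ₀ = fun x => (1 + nsq x) / (1 - nsq x)) :
    (∀ x : Fin n → ℝ, nsq x < 1 → hypLap n φ₀ x - (n : ℝ) * φ₀ x = 0) ∧
    (∀ R : ℝ, 0 < R → R < 1 → ∀ x : Fin n → ℝ, nsq x = R ^ 2 →
      hypNormalDeriv n R φ₀ x = (2 * R / (1 + R ^ 2)) * φ₀ x) :=
  stmt_10_general n φ₀ hφ₀
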